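/- arXiv:2203.12343 — 3 statements merged into one kernel-verified Lean document; each statement's English description precedes it below -/
import Mathlib

section
/- Let d ≥ 1, let ν be an admissible measure on ℝ^d, and let u : ℝ^d → ℝ be continuously differentiable with u ∈ L^1(ℝ^d) and ∇u ∈ L^1(ℝ^d; ℝ^d). Then (i) F_ν(u) ≤ C_ν (‖u‖_{L^1} + ‖∇u‖_{L^1}), where C_ν = ∫_{ℝ^d} min(1,|x|) ν(dx); and (ii) F_ν(u) ≤ (∫_{ℝ^d} |x| ν(dx)) · ‖∇u‖_{L^1}, where the right-hand side may be infinite. Here ‖∇u‖_{L^1} = ∫_{ℝ^d} |∇u(x)| dx. -/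
open MeasureTheory Filter Topology ENNReal

/-- `F_ν(u) = (1/2) ∫_{ℝ^d} ∫_{ℝ^d} |u(x+y) − u(y)| ν(dx) dy`. -/
noncomputable def Fnu {d : ℕ} (ν : Measure (EuclideanSpace ℝ (Fin d)))
    (u : EuclideanSpace ℝ (Fin d) → ℝ) : ℝ≥0∞ :=
  (1 / 2 : ℝ≥0∞) * ∫⁻ y, ∫⁻ x, ENNReal.ofReal |u (x + y) - u y| ∂ν

/-!
Since `min 1 ‖x‖` is `ν`-integrable and vanishes only on the `ν`-null set `{0}`, `ν` is σ-finite,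
so Tonelli gives `F_ν(u) = ½ ∫ ‖u(x + ·) − u‖₁ ν(dx)`. The translation difference
`‖u(x + ·) − u‖₁` is at most `2‖u‖₁` by the triangle inequality, and at most `|x| ‖∇u‖₁` by the
fundamental theorem of calculus on the segment from `y` to `y + x`, integrated in `y` using
translation invariance of Lebesgue measure. Integrating the smaller bound against `ν` gives (i),
the second one gives (ii).
-/

theorem sigmaFinite_of_lintegral_ne_top {α : Type*} [MeasurableSpace α] {μ : Measure α}
    {f : α → ℝ≥0∞} (hf : AEMeasurable f μ) (h_int : ∫⁻ x, f x ∂μ ≠ ∞)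
    (h_zero : μ {x | f x = 0} = 0) : SigmaFinite μ := by
  refine Measure.sigmaFinite_of_countable
    (S := insert {x | f x = 0} (Set.range fun n : ℕ => {x | ((n : ℝ≥0∞) + 1)⁻¹ ≤ f x}))
    ((Set.countable_range _).insert _) ?_ ?_
  · rintro s (rfl | ⟨n, rfl⟩)
    · simp [h_zero]
    · exact (meas_ge_le_lintegral_div hf (by simp) (by simp)).trans_lt
        (ENNReal.div_lt_top h_int (by simp))
  · refine Set.eq_univ_of_forall fun x => ?_
    by_cases hx : f x = 0
    · exact ⟨_, Set.mem_insert _ _, hx⟩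
    · obtain ⟨n, hn⟩ := ENNReal.exists_inv_nat_lt hx
      refine ⟨_, Set.mem_insert_of_mem _ ⟨n, rfl⟩, ?_⟩
      exact le_trans (ENNReal.inv_le_inv.2 le_self_add) hn.le

section Translation

variable {G : Type*} [MeasurableSpace G] [AddGroup G] [MeasurableAdd G]
  (μ : Measure G) [μ.IsAddLeftInvariant]

theorem lintegral_abs_sub_add_left_le {u : G → ℝ} (hu : Measurable u) (x : G) :
    ∫⁻ y, ENNReal.ofReal |u (x + y) - u y| ∂μ ≤ 2 * ∫⁻ y, ENNReal.ofReal |u y| ∂μ := by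
  calc ∫⁻ y, ENNReal.ofReal |u (x + y) - u y| ∂μ
      ≤ ∫⁻ y, (ENNReal.ofReal |u (x + y)| + ENNReal.ofReal |u y|) ∂μ :=
        lintegral_mono fun y => (ENNReal.ofReal_le_ofReal (abs_sub _ _)).trans ofReal_add_le
    _ = ∫⁻ y, ENNReal.ofReal |u (x + y)| ∂μ + ∫⁻ y, ENNReal.ofReal |u y| ∂μ :=
        lintegral_add_left (hu.comp (measurable_const_add x)).abs.ennreal_ofReal _
    _ = 2 * ∫⁻ y, ENNReal.ofReal |u y| ∂μ := by
        rw [lintegral_add_left_eq_self (fun y => ENNReal.ofReal |u y|) x, two_mul]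

end Translation

section Gradient

variable {E : Type*} [NormedAddCommGroup E] [NormedSpace ℝ E] {u : E → ℝ}

theorem abs_sub_le_integral_norm_fderiv_mul (hu : ContDiff ℝ 1 u) (x y : E) :
    |u (x + y) - u y| ≤ ∫ t in (0 : ℝ)..1, ‖fderiv ℝ u (y + t • x)‖ * ‖x‖ := by
  have h_fderiv_cont : Continuous fun t : ℝ => fderiv ℝ u (y + t • x) :=
    (hu.continuous_fderiv one_ne_zero).comp (by fun_prop)
  have h_deriv : ∀ t ∈ Set.uIcc (0 : ℝ) 1,
      HasDerivAt (fun s : ℝ => u (y + s • x)) (fderiv ℝ u (y + t • x) x) t := fun t _ => by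
    have h_line : HasDerivAt (fun s : ℝ => y + s • x) x t := by
      simpa using ((hasDerivAt_id t).smul_const x).const_add y
    exact (hu.differentiable one_ne_zero _).hasFDerivAt.comp_hasDerivAt t h_line
  have h_ftc : u (x + y) - u y = ∫ t in (0 : ℝ)..1, fderiv ℝ u (y + t • x) x := by
    rw [intervalIntegral.integral_eq_sub_of_hasDerivAt h_deriv
      ((h_fderiv_cont.clm_apply continuous_const).intervalIntegrable 0 1)]
    simp [add_comm]
  rw [h_ftc, ← Real.norm_eq_abs]
  refine (intervalIntegral.norm_integral_le_integral_norm zero_le_one).trans ?_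
  exact intervalIntegral.integral_mono_on zero_le_one
    ((h_fderiv_cont.clm_apply continuous_const).norm.intervalIntegrable 0 1)
    ((h_fderiv_cont.norm.mul continuous_const).intervalIntegrable 0 1)
    fun t _ => (fderiv ℝ u (y + t • x)).le_opNorm x

variable [MeasurableSpace E] [BorelSpace E] (μ : Measure E) [SFinite μ] [μ.IsAddRightInvariant]

theorem lintegral_abs_sub_add_left_le_norm_mul (hu : ContDiff ℝ 1 u) (x : E) :
    ∫⁻ y, ENNReal.ofReal |u (x + y) - u y| ∂μ ≤
      ENNReal.ofReal ‖x‖ * ∫⁻ z, ENNReal.ofReal ‖fderiv ℝ u z‖ ∂μ := by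
  have h_fderiv_cont : Continuous (fderiv ℝ u) := hu.continuous_fderiv one_ne_zero
  have h_pointwise : ∀ y, ENNReal.ofReal |u (x + y) - u y| ≤
      ∫⁻ t in Set.Ioc (0 : ℝ) 1, ENNReal.ofReal ‖fderiv ℝ u (y + t • x)‖ * ENNReal.ofReal ‖x‖ := by
    intro y
    have h_cont : Continuous fun t : ℝ => ‖fderiv ℝ u (y + t • x)‖ * ‖x‖ := by fun_prop
    refine (ENNReal.ofReal_le_ofReal (abs_sub_le_integral_norm_fderiv_mul hu x y)).trans_eq ?_
    rw [intervalIntegral.integral_of_le zero_le_one, ofReal_integral_eq_lintegral_ofReal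
      h_cont.integrableOn_Ioc (ae_of_all _ fun t => by positivity)]
    simp_rw [ENNReal.ofReal_mul (norm_nonneg _)]
  have h_meas : AEMeasurable (Function.uncurry fun (y : E) (t : ℝ) =>
      ENNReal.ofReal ‖fderiv ℝ u (y + t • x)‖ * ENNReal.ofReal ‖x‖)
      (μ.prod (volume.restrict (Set.Ioc 0 1))) :=
    ((h_fderiv_cont.comp (by fun_prop : Continuous fun p : E × ℝ => p.1 + p.2 • x)).norm
      |>.measurable.ennreal_ofReal.mul_const _).aemeasurable
  calc ∫⁻ y, ENNReal.ofReal |u (x + y) - u y| ∂μ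
      ≤ ∫⁻ y, (∫⁻ t in Set.Ioc (0 : ℝ) 1,
          ENNReal.ofReal ‖fderiv ℝ u (y + t • x)‖ * ENNReal.ofReal ‖x‖) ∂μ :=
        lintegral_mono h_pointwise
    _ = ∫⁻ t in Set.Ioc (0 : ℝ) 1, ∫⁻ y,
          ENNReal.ofReal ‖fderiv ℝ u (y + t • x)‖ * ENNReal.ofReal ‖x‖ ∂μ :=
        lintegral_lintegral_swap h_meas
    _ = ∫⁻ t in Set.Ioc (0 : ℝ) 1,
          (∫⁻ z, ENNReal.ofReal ‖fderiv ℝ u z‖ ∂μ) * ENNReal.ofReal ‖x‖ := by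
        congr 1 with t
        rw [lintegral_mul_const _ (by fun_prop),
          lintegral_add_right_eq_self (fun z => ENNReal.ofReal ‖fderiv ℝ u z‖) (t • x)]
    _ = ENNReal.ofReal ‖x‖ * ∫⁻ z, ENNReal.ofReal ‖fderiv ℝ u z‖ ∂μ := by
        simp [mul_comm]

theorem lintegral_abs_sub_add_left_le_min_one_norm_mul [μ.IsAddLeftInvariant]
    (hu : ContDiff ℝ 1 u) (x : E) :
    ∫⁻ y, ENNReal.ofReal |u (x + y) - u y| ∂μ ≤ ENNReal.ofReal (min 1 ‖x‖) *
      (2 * (∫⁻ y, ENNReal.ofReal |u y| ∂μ + ∫⁻ z, ENNReal.ofReal ‖fderiv ℝ u z‖ ∂μ)) := by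
  set A := ∫⁻ y, ENNReal.ofReal |u y| ∂μ
  set B := ∫⁻ z, ENNReal.ofReal ‖fderiv ℝ u z‖ ∂μ
  rw [ENNReal.ofReal_min, min_mul, ENNReal.ofReal_one, one_mul]
  refine le_min ((lintegral_abs_sub_add_left_le μ hu.continuous.measurable x).trans ?_)
    ((lintegral_abs_sub_add_left_le_norm_mul μ hu x).trans ?_)
  · exact mul_le_mul_right le_self_add _
  · exact mul_le_mul_right (le_add_self.trans (le_mul_of_one_le_left' one_le_two)) _

end Gradient

theorem Fnu_eq_half_mul_lintegral_lintegral_swap {d : ℕ} (ν : Measure (EuclideanSpace ℝ (Fin d)))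
    [SFinite ν] {u : EuclideanSpace ℝ (Fin d) → ℝ} (hu : Measurable u) :
    Fnu ν u = 1 / 2 * ∫⁻ x, (∫⁻ y, ENNReal.ofReal |u (x + y) - u y|) ∂ν := by
  rw [Fnu]
  congr 1
  refine lintegral_lintegral_swap (Measurable.aemeasurable ?_)
  fun_prop

theorem statement3_general {d : ℕ}
    (ν : Measure (EuclideanSpace ℝ (Fin d)))
    (hν0 : ν {0} = 0)
    (hν1 : (∫⁻ x, ENNReal.ofReal (min 1 ‖x‖) ∂ν) < ⊤)
    (u : EuclideanSpace ℝ (Fin d) → ℝ)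
    (hu : ContDiff ℝ 1 u) (huL1 : Integrable u)
    (hgrad : Integrable fun x => ‖fderiv ℝ u x‖) :
    Fnu ν u ≤ (∫⁻ x, ENNReal.ofReal (min 1 ‖x‖) ∂ν) *
        (ENNReal.ofReal (∫ x, |u x|) + ENNReal.ofReal (∫ x, ‖fderiv ℝ u x‖)) ∧
      Fnu ν u ≤ (∫⁻ x, ENNReal.ofReal ‖x‖ ∂ν) *
        ENNReal.ofReal (∫ x, ‖fderiv ℝ u x‖) := by
  have : SigmaFinite ν := sigmaFinite_of_lintegral_ne_top (by fun_prop) hν1.ne (by simpa)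
  rw [ofReal_integral_eq_lintegral_ofReal huL1.abs (ae_of_all _ fun x => abs_nonneg _),
    ofReal_integral_eq_lintegral_ofReal hgrad (ae_of_all _ fun x => norm_nonneg _),
    Fnu_eq_half_mul_lintegral_lintegral_swap ν hu.continuous.measurable]
  set A := ∫⁻ x, ENNReal.ofReal |u x|
  set B := ∫⁻ x, ENNReal.ofReal ‖fderiv ℝ u x‖
  have h_grad x := lintegral_abs_sub_add_left_le_norm_mul volume hu x
  have h_min x := lintegral_abs_sub_add_left_le_min_one_norm_mul volume hu x
  constructor
  · calc 1 / 2 * ∫⁻ x, (∫⁻ y, ENNReal.ofReal |u (x + y) - u y|) ∂ν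
        ≤ 1 / 2 * ∫⁻ x, ENNReal.ofReal (min 1 ‖x‖) * (2 * (A + B)) ∂ν :=
          mul_le_mul_right (lintegral_mono h_min) _
      _ = (∫⁻ x, ENNReal.ofReal (min 1 ‖x‖) ∂ν) * (A + B) := by
          rw [lintegral_mul_const'' _ (by fun_prop), mul_left_comm, ← mul_assoc (1 / 2),
            one_div, ENNReal.inv_mul_cancel two_ne_zero ofNat_ne_top, one_mul]
  · calc 1 / 2 * ∫⁻ x, (∫⁻ y, ENNReal.ofReal |u (x + y) - u y|) ∂ν
        ≤ 1 * ∫⁻ x, ENNReal.ofReal ‖x‖ * B ∂ν :=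
          mul_le_mul' (by norm_num) (lintegral_mono h_grad)
      _ = (∫⁻ x, ENNReal.ofReal ‖x‖ ∂ν) * B := by
          rw [one_mul, lintegral_mul_const'' _ (by fun_prop)]

/-- For an admissible measure `ν` and a `C¹` function `u ∈ L¹(ℝ^d)` with
`∇u ∈ L¹(ℝ^d; ℝ^d)`:
(i) `F_ν(u) ≤ C_ν (‖u‖_{L¹} + ‖∇u‖_{L¹})` with `C_ν = ∫ min(1,|x|) ν(dx)`; and
(ii) `F_ν(u) ≤ (∫ |x| ν(dx)) ‖∇u‖_{L¹}` (the right-hand side may be infinite). -/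
theorem statement3 {d : ℕ} (hd : 1 ≤ d)
    (ν : Measure (EuclideanSpace ℝ (Fin d)))
    (hν0 : ν {0} = 0)
    (hν1 : (∫⁻ x, ENNReal.ofReal (min 1 ‖x‖) ∂ν) < ⊤)
    (u : EuclideanSpace ℝ (Fin d) → ℝ)
    (hu : ContDiff ℝ 1 u) (huL1 : Integrable u)
    (hgrad : Integrable fun x => ‖fderiv ℝ u x‖) :
    Fnu ν u ≤ (∫⁻ x, ENNReal.ofReal (min 1 ‖x‖) ∂ν) *
        (ENNReal.ofReal (∫ x, |u x|) + ENNReal.ofReal (∫ x, ‖fderiv ℝ u x‖)) ∧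
      Fnu ν u ≤ (∫⁻ x, ENNReal.ofReal ‖x‖ ∂ν) *
        ENNReal.ofReal (∫ x, ‖fderiv ℝ u x‖) :=
  statement3_general ν hν0 hν1 u hu huL1 hgrad
end

section
/- Let d ≥ 1, let η be a Borel probability measure on the unit sphere S^{d−1}, and for α ∈ (0,1) let ν_α be the α-stable Lévy measure defined by ν_α(A) = ∫_{S^{d−1}} ∫_0^∞ 1_A(rθ) r^{−1−α} dr η(dθ) for Borel sets A ⊂ ℝ^d. Then for every continuously differentiable f : ℝ^d → ℝ with f ∈ L^1(ℝ^d) and ∇f ∈ L^1(ℝ^d;ℝ^d), lim_{α→1⁻} (1−α) F_{ν_α}(f) = (1/2) ∫_{S^{d−1}} ∫_{ℝ^d} |∇f(x) · θ| dx η(dθ). -/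
open MeasureTheory Filter Topology ENNReal

/-- The `α`-stable Lévy measure with spectral measure `η` on the unit sphere:
`ν_α(A) = ∫_{S^{d−1}} ∫_0^∞ 1_A(rθ) r^{−1−α} dr η(dθ)`. -/
noncomputable def stableMeasure {d : ℕ} (η : Measure (EuclideanSpace ℝ (Fin d)))
    (α : ℝ) : Measure (EuclideanSpace ℝ (Fin d)) :=
  η.bind fun θ => Measure.map (fun r : ℝ => r • θ)
    ((volume.restrict (Set.Ioi (0 : ℝ))).withDensity fun r =>
      ENNReal.ofReal (r ^ (-1 - α)))

/-!
In polar coordinates and by Tonelli, `(1 - α) F_{ν_α}(f)` is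
`½ ∫ (1 - α) ∫₀^∞ r^(-1-α) G_θ(r) dr dη(θ)` with `G_θ(r) = ∫ |f(rθ + y) - f(y)| dy`.
The fundamental theorem of calculus along segments gives `G_θ(r) ≤ r L(θ)` with
`L(θ) = ∫ |∇f(x)·θ| dx`, trivially `G_θ(r) ≤ 2‖f‖₁`, and Fatou's lemma gives the matching lower
bound, so `G_θ(r) / r → L(θ)` as `r → 0⁺`. The weights `(1 - α) r^(-α) dr` on `(0, 1]` have mass
one and concentrate at `0` as `α → 1⁻`, while the tail `(1, ∞)` contributes at most
`2‖f‖₁ (1 - α) / α`; hence the radial integral tends to `L(θ)`. Since `L(θ) ≤ ‖∇f‖₁` on the unit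
sphere, dominated convergence in `θ` concludes.
-/

open Set

noncomputable section

lemma ofReal_rpow_neg_one_sub_mul {r : ℝ} (hr : 0 < r) (α : ℝ) :
    ENNReal.ofReal (r ^ (-1 - α)) * ENNReal.ofReal r = ENNReal.ofReal (r ^ (-α)) := by
  rw [← ENNReal.ofReal_mul (Real.rpow_nonneg hr.le _), show -1 - α = -α - 1 by ring,
    Real.rpow_sub_one hr.ne', div_mul_cancel₀ _ hr.ne']

lemma lintegral_Ioc_rpow {p δ : ℝ} (hp : -1 < p) (hδ : 0 < δ) :
    ∫⁻ r in Ioc 0 δ, ENNReal.ofReal (r ^ p) = ENNReal.ofReal (δ ^ (p + 1) / (p + 1)) := by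
  have hint : IntegrableOn (fun r : ℝ => r ^ p) (Ioc 0 δ) := by
    rw [← intervalIntegrable_iff_integrableOn_Ioc_of_le hδ.le]
    exact intervalIntegral.intervalIntegrable_rpow' hp
  rw [← ofReal_integral_eq_lintegral_ofReal hint, ← intervalIntegral.integral_of_le hδ.le,
    integral_rpow (Or.inl hp), Real.zero_rpow (by linarith), sub_zero]
  filter_upwards [ae_restrict_mem measurableSet_Ioc] with r hr
  exact Real.rpow_nonneg hr.1.le p

lemma lintegral_Ioi_one_rpow {p : ℝ} (hp : p < -1) :
    ∫⁻ r in Ioi 1, ENNReal.ofReal (r ^ p) = ENNReal.ofReal (-1 / (p + 1)) := by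
  rw [← ofReal_integral_eq_lintegral_ofReal (integrableOn_Ioi_rpow_of_lt hp one_pos),
    integral_Ioi_rpow_of_lt hp one_pos, Real.one_rpow]
  filter_upwards [ae_restrict_mem measurableSet_Ioi] with r hr
  exact Real.rpow_nonneg (zero_le_one.trans hr.le) p

lemma measurable_ofReal_rpow_const (p : ℝ) : Measurable fun r : ℝ => ENNReal.ofReal (r ^ p) :=
  (measurable_id.pow_const p).ennreal_ofReal

section RadialIntegral

variable {g : ℝ → ℝ≥0∞} {L C : ℝ≥0∞} {α : ℝ}

lemma one_sub_mul_lintegral_rpow_mul_le (hgL : ∀ r, 0 < r → g r ≤ ENNReal.ofReal r * L)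
    (hgC : ∀ r, 0 < r → g r ≤ C) (hα : α ∈ Ioo 0 1) :
    ENNReal.ofReal (1 - α) * ∫⁻ r in Ioi 0, ENNReal.ofReal (r ^ (-1 - α)) * g r
      ≤ L + ENNReal.ofReal ((1 - α) / α) * C := by
  obtain ⟨hα0, hα1⟩ := hα
  have hnear : ∫⁻ r in Ioc 0 1, ENNReal.ofReal (r ^ (-1 - α)) * g r
      ≤ ENNReal.ofReal (1 / (1 - α)) * L :=
    calc ∫⁻ r in Ioc 0 1, ENNReal.ofReal (r ^ (-1 - α)) * g r
        ≤ ∫⁻ r in Ioc 0 1, ENNReal.ofReal (r ^ (-α)) * L := by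
          refine setLIntegral_mono' measurableSet_Ioc fun r hr => ?_
          rw [← ofReal_rpow_neg_one_sub_mul hr.1, mul_assoc]
          exact mul_le_mul_right (hgL r hr.1) _
      _ = ENNReal.ofReal (1 / (1 - α)) * L := by
          rw [lintegral_mul_const _ (measurable_ofReal_rpow_const _),
            lintegral_Ioc_rpow (by linarith) one_pos, Real.one_rpow, neg_add_eq_sub]
  have hfar : ∫⁻ r in Ioi 1, ENNReal.ofReal (r ^ (-1 - α)) * g r
      ≤ ENNReal.ofReal (1 / α) * C :=
    calc ∫⁻ r in Ioi 1, ENNReal.ofReal (r ^ (-1 - α)) * g r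
        ≤ ∫⁻ r in Ioi 1, ENNReal.ofReal (r ^ (-1 - α)) * C :=
          setLIntegral_mono' measurableSet_Ioi fun r hr =>
            mul_le_mul_right (hgC r (one_pos.trans hr)) _
      _ = ENNReal.ofReal (1 / α) * C := by
          rw [lintegral_mul_const _ (measurable_ofReal_rpow_const _),
            lintegral_Ioi_one_rpow (by linarith), show -1 - α + 1 = -α by ring, div_neg,
            neg_div, neg_neg]
  rw [← Ioc_union_Ioi_eq_Ioi zero_le_one, lintegral_union measurableSet_Ioi Ioc_disjoint_Ioi_same]
  calc ENNReal.ofReal (1 - α) * ((∫⁻ r in Ioc 0 1, ENNReal.ofReal (r ^ (-1 - α)) * g r)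
        + ∫⁻ r in Ioi 1, ENNReal.ofReal (r ^ (-1 - α)) * g r)
      ≤ ENNReal.ofReal (1 - α) *
          (ENNReal.ofReal (1 / (1 - α)) * L + ENNReal.ofReal (1 / α) * C) := by
        gcongr
    _ = L + ENNReal.ofReal ((1 - α) / α) * C := by
        rw [mul_add, ← mul_assoc, ← mul_assoc, ← ENNReal.ofReal_mul (by linarith),
          ← ENNReal.ofReal_mul (by linarith), mul_one_div_cancel (by linarith), mul_one_div,
          ENNReal.ofReal_one, one_mul]

lemma one_sub_mul_lintegral_rpow_mul_le_add (hgL : ∀ r, 0 < r → g r ≤ ENNReal.ofReal r * L)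
    (hgC : ∀ r, 0 < r → g r ≤ C) (hα : α ∈ Ioo (1 / 2) 1) :
    ENNReal.ofReal (1 - α) * ∫⁻ r in Ioi 0, ENNReal.ofReal (r ^ (-1 - α)) * g r ≤ L + C := by
  obtain ⟨hα0, hα1⟩ := hα
  refine (one_sub_mul_lintegral_rpow_mul_le hgL hgC ⟨by linarith, hα1⟩).trans ?_
  gcongr
  refine mul_le_of_le_one_left' (ENNReal.ofReal_le_one.mpr ?_)
  rw [div_le_one (by linarith)]
  linarith

lemma mul_le_one_sub_mul_lintegral_rpow_mul {b : ℝ≥0∞} {δ : ℝ} (hδ : 0 < δ) (hα : α < 1)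
    (hg : ∀ r ∈ Ioc 0 δ, b * ENNReal.ofReal r ≤ g r) :
    ENNReal.ofReal (δ ^ (1 - α)) * b
      ≤ ENNReal.ofReal (1 - α) * ∫⁻ r in Ioi 0, ENNReal.ofReal (r ^ (-1 - α)) * g r :=
  calc ENNReal.ofReal (δ ^ (1 - α)) * b
      = ENNReal.ofReal (1 - α) * ((∫⁻ r in Ioc 0 δ, ENNReal.ofReal (r ^ (-α))) * b) := by
        rw [lintegral_Ioc_rpow (by linarith) hδ, neg_add_eq_sub, ← mul_assoc,
          ← ENNReal.ofReal_mul (by linarith), mul_div_cancel₀ _ (by linarith)]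
    _ ≤ ENNReal.ofReal (1 - α) * ∫⁻ r in Ioc 0 δ, ENNReal.ofReal (r ^ (-1 - α)) * g r := by
        rw [← lintegral_mul_const _ (measurable_ofReal_rpow_const _)]
        gcongr 1
        refine setLIntegral_mono' measurableSet_Ioc fun r hr => ?_
        rw [← ofReal_rpow_neg_one_sub_mul hr.1, mul_assoc, mul_comm _ b]
        exact mul_le_mul_right (hg r hr) _
    _ ≤ ENNReal.ofReal (1 - α) * ∫⁻ r in Ioi 0, ENNReal.ofReal (r ^ (-1 - α)) * g r := by
        gcongr
        exact Ioc_subset_Ioi_self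

lemma tendsto_one_sub_mul_lintegral_rpow_mul (hC : C ≠ ∞)
    (hgL : ∀ r, 0 < r → g r ≤ ENNReal.ofReal r * L) (hgC : ∀ r, 0 < r → g r ≤ C)
    (hg0 : Tendsto (fun r => g r / ENNReal.ofReal r) (𝓝[>] 0) (𝓝 L)) :
    Tendsto (fun α => ENNReal.ofReal (1 - α) *
        ∫⁻ r in Ioi 0, ENNReal.ofReal (r ^ (-1 - α)) * g r) (𝓝[<] 1) (𝓝 L) := by
  refine tendsto_of_le_liminf_of_limsup_le ?_ ?_ (by isBoundedDefault) (by isBoundedDefault)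
  · refine le_of_forall_lt_imp_le_of_dense fun b hb => ?_
    obtain ⟨u, hu, hgu⟩ := mem_nhdsGT_iff_exists_Ioo_subset.mp (hg0.eventually_const_lt hb)
    have hbg : ∀ r ∈ Ioc 0 (u / 2), b * ENNReal.ofReal r ≤ g r := fun r hr =>
      (ENNReal.le_div_iff_mul_le (Or.inl (ENNReal.ofReal_pos.mpr hr.1).ne')
        (Or.inl ENNReal.ofReal_ne_top)).mp (hgu ⟨hr.1, hr.2.trans_lt (half_lt_self hu)⟩).le
    have hcont : Continuous fun α : ℝ => ENNReal.ofReal ((u / 2) ^ (1 - α)) :=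
      ENNReal.continuous_ofReal.comp <| continuous_const.rpow (continuous_const.sub continuous_id)
        fun _ => Or.inl (half_pos hu).ne'
    have hlim : Tendsto (fun α : ℝ => ENNReal.ofReal ((u / 2) ^ (1 - α)) * b) (𝓝 1) (𝓝 b) := by
      simpa using ENNReal.Tendsto.mul_const (hcont.tendsto 1) (Or.inl (by simp)) (b := b)
    calc b = liminf (fun α : ℝ => ENNReal.ofReal ((u / 2) ^ (1 - α)) * b) (𝓝[<] 1) :=
          (hlim.mono_left nhdsWithin_le_nhds).liminf_eq.symm
      _ ≤ _ := liminf_le_liminf (eventually_nhdsWithin_of_forall fun α hα =>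
          mul_le_one_sub_mul_lintegral_rpow_mul (half_pos hu) hα hbg)
  · have hlim : Tendsto (fun α : ℝ => L + ENNReal.ofReal ((1 - α) / α) * C) (𝓝[<] 1) (𝓝 L) := by
      have h0 : Tendsto (fun α : ℝ => (1 - α) / α) (𝓝[<] 1) (𝓝 0) := by
        have : ContinuousAt (fun α : ℝ => (1 - α) / α) 1 := by fun_prop (disch := norm_num)
        simpa using this.tendsto.mono_left nhdsWithin_le_nhds
      simpa using (ENNReal.Tendsto.mul_const (ENNReal.tendsto_ofReal h0) (Or.inr hC)).const_add L
    calc limsup _ (𝓝[<] 1)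
        ≤ limsup (fun α : ℝ => L + ENNReal.ofReal ((1 - α) / α) * C) (𝓝[<] 1) :=
          limsup_le_limsup (eventually_of_mem (Ioo_mem_nhdsLT one_pos) fun α hα =>
            one_sub_mul_lintegral_rpow_mul_le hgL hgC hα)
      _ = L := hlim.limsup_eq

end RadialIntegral

section Increments

variable {E : Type*} [NormedAddCommGroup E] {f : E → ℝ}

section Measure

variable [MeasurableSpace E] (μ : Measure E)

def l1Increment (f : E → ℝ) (v : E) : ℝ≥0∞ :=
  ∫⁻ y, ENNReal.ofReal |f (v + y) - f y| ∂μ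

lemma l1Increment_le_two_mul [MeasurableAdd E] [μ.IsAddLeftInvariant] (hf : Measurable f)
    (v : E) : l1Increment μ f v ≤ 2 * ∫⁻ x, ENNReal.ofReal |f x| ∂μ :=
  calc l1Increment μ f v
      ≤ ∫⁻ y, (ENNReal.ofReal |f (v + y)| + ENNReal.ofReal |f y|) ∂μ :=
        lintegral_mono fun y => (ENNReal.ofReal_le_ofReal (abs_sub _ _)).trans ENNReal.ofReal_add_le
    _ = 2 * ∫⁻ x, ENNReal.ofReal |f x| ∂μ := by
        rw [lintegral_add_right _ hf.abs.ennreal_ofReal,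
          lintegral_add_left_eq_self (fun x => ENNReal.ofReal |f x|) v, two_mul]

lemma measurable_l1Increment [OpensMeasurableSpace E] [SecondCountableTopology E] [SFinite μ]
    (hf : Continuous f) : Measurable (l1Increment μ f) :=
  Measurable.lintegral_prod_right' <| ENNReal.continuous_ofReal.comp
    ((hf.comp continuous_add).sub (hf.comp continuous_snd)).abs |>.measurable

end Measure

variable [NormedSpace ℝ E]

lemma abs_sub_le_lintegral_fderiv (hf : ContDiff ℝ 1 f) (y v : E) :
    ENNReal.ofReal |f (v + y) - f y|
      ≤ ∫⁻ t in Ioc (0 : ℝ) 1, ENNReal.ofReal |fderiv ℝ f (y + t • v) v| := by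
  have hcont : Continuous fun t : ℝ => fderiv ℝ f (y + t • v) v :=
    ((hf.continuous_fderiv one_ne_zero).comp (by fun_prop)).clm_apply continuous_const
  have hderiv : ∀ t ∈ uIcc (0 : ℝ) 1,
      HasDerivAt (fun s : ℝ => f (y + s • v)) (fderiv ℝ f (y + t • v) v) t := fun t _ =>
    (hf.differentiable one_ne_zero _).hasFDerivAt.comp_hasDerivAt t
      (by simpa using ((hasDerivAt_id t).smul_const v).const_add y)
  have hftc : f (v + y) - f y = ∫ t in Ioc (0 : ℝ) 1, fderiv ℝ f (y + t • v) v := by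
    rw [← intervalIntegral.integral_of_le zero_le_one,
      intervalIntegral.integral_eq_sub_of_hasDerivAt hderiv (hcont.intervalIntegrable 0 1)]
    simp [add_comm]
  rw [hftc, ← ofReal_integral_eq_lintegral_ofReal hcont.abs.integrableOn_Ioc
    (Eventually.of_forall fun _ => abs_nonneg _)]
  exact ENNReal.ofReal_le_ofReal abs_integral_le_integral_abs

lemma tendsto_ofReal_abs_sub_div (hf : ContDiff ℝ 1 f) (y v : E) :
    Tendsto (fun r => ENNReal.ofReal |f (r • v + y) - f y| / ENNReal.ofReal r) (𝓝[>] 0)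
      (𝓝 (ENNReal.ofReal |fderiv ℝ f y v|)) := by
  have hslope := ((hf.differentiable one_ne_zero y).hasFDerivAt.hasLineDerivAt v)
    |>.tendsto_slope_zero_right
  refine (ENNReal.tendsto_ofReal hslope.abs).congr' ?_
  filter_upwards [self_mem_nhdsWithin] with r (hr : 0 < r)
  rw [smul_eq_mul, abs_mul, abs_inv, abs_of_pos hr, inv_mul_eq_div, ENNReal.ofReal_div_of_pos hr,
    add_comm y]

variable [MeasurableSpace E] (μ : Measure E)

def directionalVariation (f : E → ℝ) (v : E) : ℝ≥0∞ :=
  ∫⁻ x, ENNReal.ofReal |fderiv ℝ f x v| ∂μ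

lemma directionalVariation_smul (f : E → ℝ) (r : ℝ) (v : E) :
    directionalVariation μ f (r • v) = ENNReal.ofReal |r| * directionalVariation μ f v := by
  simp_rw [directionalVariation, map_smul, smul_eq_mul, abs_mul,
    ENNReal.ofReal_mul (abs_nonneg r)]
  exact lintegral_const_mul' _ _ ENNReal.ofReal_ne_top

lemma directionalVariation_le (f : E → ℝ) (v : E) :
    directionalVariation μ f v ≤ ENNReal.ofReal ‖v‖ * ∫⁻ x, ENNReal.ofReal ‖fderiv ℝ f x‖ ∂μ := by
  rw [← lintegral_const_mul' _ _ ENNReal.ofReal_ne_top]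
  refine lintegral_mono fun x => ?_
  rw [← ENNReal.ofReal_mul (norm_nonneg v), mul_comm]
  exact ENNReal.ofReal_le_ofReal ((fderiv ℝ f x).le_opNorm v)

lemma lintegral_directionalVariation_le (f : E → ℝ) {η : Measure E} [IsProbabilityMeasure η]
    (hη : ∀ᵐ θ ∂η, ‖θ‖ = 1) :
    ∫⁻ θ, directionalVariation μ f θ ∂η ≤ ∫⁻ x, ENNReal.ofReal ‖fderiv ℝ f x‖ ∂μ :=
  calc ∫⁻ θ, directionalVariation μ f θ ∂η
      ≤ ∫⁻ _, ∫⁻ x, ENNReal.ofReal ‖fderiv ℝ f x‖ ∂μ ∂η := lintegral_mono_ae <| by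
        filter_upwards [hη] with θ hθ
        simpa [hθ] using directionalVariation_le μ f θ
    _ = ∫⁻ x, ENNReal.ofReal ‖fderiv ℝ f x‖ ∂μ := by simp

variable [BorelSpace E] [SFinite μ]

lemma measurable_lintegral_rpow_mul_l1Increment [SecondCountableTopology E] (hf : Continuous f)
    (α : ℝ) : Measurable fun v =>
      ∫⁻ r in Ioi (0 : ℝ), ENNReal.ofReal (r ^ (-1 - α)) * l1Increment μ f (r • v) :=
  (((measurable_ofReal_rpow_const _).comp measurable_snd).mul
    ((measurable_l1Increment μ hf).comp (measurable_snd.smul measurable_fst))).lintegral_prod_right'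

variable [μ.IsAddLeftInvariant]

lemma l1Increment_le_directionalVariation (hf : ContDiff ℝ 1 f) (v : E) :
    l1Increment μ f v ≤ directionalVariation μ f v :=
  calc l1Increment μ f v
      ≤ ∫⁻ y, (∫⁻ t in Ioc (0 : ℝ) 1, ENNReal.ofReal |fderiv ℝ f (y + t • v) v|) ∂μ :=
        lintegral_mono fun y => abs_sub_le_lintegral_fderiv hf y v
    _ = ∫⁻ t in Ioc (0 : ℝ) 1, ∫⁻ y, ENNReal.ofReal |fderiv ℝ f (y + t • v) v| ∂μ := by
        refine lintegral_lintegral_swap (Continuous.aemeasurable ?_)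
        exact ENNReal.continuous_ofReal.comp (((hf.continuous_fderiv one_ne_zero).comp
          (by fun_prop)).clm_apply continuous_const).abs
    _ = directionalVariation μ f v := by
        simp_rw [add_comm _ (_ • v), lintegral_add_left_eq_self
          (fun x => ENNReal.ofReal |fderiv ℝ f x v|), setLIntegral_const, Real.volume_Ioc]
        simp [directionalVariation]

lemma l1Increment_smul_le (hf : ContDiff ℝ 1 f) (v : E) {r : ℝ} (hr : 0 < r) :
    l1Increment μ f (r • v) ≤ ENNReal.ofReal r * directionalVariation μ f v := by
  simpa [directionalVariation_smul, abs_of_pos hr] using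
    l1Increment_le_directionalVariation μ hf (r • v)

lemma tendsto_l1Increment_smul_div (hf : ContDiff ℝ 1 f) (v : E) :
    Tendsto (fun r => l1Increment μ f (r • v) / ENNReal.ofReal r) (𝓝[>] 0)
      (𝓝 (directionalVariation μ f v)) := by
  have hmeas : ∀ r : ℝ, Measurable fun y => ENNReal.ofReal |f (r • v + y) - f y| := fun r =>
    (hf.continuous.comp (continuous_const_add _)).sub hf.continuous |>.abs.measurable.ennreal_ofReal
  refine tendsto_of_le_liminf_of_limsup_le ?_ ?_ (by isBoundedDefault) (by isBoundedDefault)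
  · calc directionalVariation μ f v
        = ∫⁻ y, liminf (fun r => ENNReal.ofReal |f (r • v + y) - f y| / ENNReal.ofReal r)
            (𝓝[>] 0) ∂μ :=
          lintegral_congr fun y => (tendsto_ofReal_abs_sub_div hf y v).liminf_eq.symm
      _ ≤ liminf (fun r => ∫⁻ y, ENNReal.ofReal |f (r • v + y) - f y| / ENNReal.ofReal r ∂μ)
            (𝓝[>] 0) :=
          lintegral_liminf_le fun r => (hmeas r).div_const _
      _ = liminf (fun r => l1Increment μ f (r • v) / ENNReal.ofReal r) (𝓝[>] 0) := by
          simp_rw [div_eq_mul_inv, lintegral_mul_const _ (hmeas _), l1Increment]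
  · refine limsup_le_of_le (by isBoundedDefault) ?_
    filter_upwards [self_mem_nhdsWithin] with r (hr : 0 < r)
    exact ENNReal.div_le_of_le_mul' (l1Increment_smul_le μ hf v hr)

lemma one_sub_mul_lintegral_rpow_mul_l1Increment_le (hf : ContDiff ℝ 1 f) (v : E) {α : ℝ}
    (hα : α ∈ Ioo (1 / 2) 1) :
    ENNReal.ofReal (1 - α) *
        ∫⁻ r in Ioi 0, ENNReal.ofReal (r ^ (-1 - α)) * l1Increment μ f (r • v)
      ≤ directionalVariation μ f v + 2 * ∫⁻ x, ENNReal.ofReal |f x| ∂μ :=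
  one_sub_mul_lintegral_rpow_mul_le_add (fun _ hr => l1Increment_smul_le μ hf v hr)
    (fun r _ => l1Increment_le_two_mul μ hf.continuous.measurable (r • v)) hα

lemma tendsto_one_sub_mul_lintegral_rpow_mul_l1Increment (hf : ContDiff ℝ 1 f)
    (hfi : ∫⁻ x, ENNReal.ofReal |f x| ∂μ ≠ ∞) (v : E) :
    Tendsto (fun α => ENNReal.ofReal (1 - α) *
        ∫⁻ r in Ioi 0, ENNReal.ofReal (r ^ (-1 - α)) * l1Increment μ f (r • v))
      (𝓝[<] 1) (𝓝 (directionalVariation μ f v)) :=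
  tendsto_one_sub_mul_lintegral_rpow_mul (ENNReal.mul_ne_top ofNat_ne_top hfi)
    (fun _ hr => l1Increment_smul_le μ hf v hr)
    (fun r _ => l1Increment_le_two_mul μ hf.continuous.measurable (r • v))
    (tendsto_l1Increment_smul_div μ hf v)

end Increments

section StableMeasure

variable {d : ℕ}

lemma lintegral_stableMeasure (η : Measure (EuclideanSpace ℝ (Fin d))) (α : ℝ)
    {g : EuclideanSpace ℝ (Fin d) → ℝ≥0∞} (hg : Measurable g) :
    ∫⁻ x, g x ∂stableMeasure η α
      = ∫⁻ θ, (∫⁻ r in Ioi (0 : ℝ), ENNReal.ofReal (r ^ (-1 - α)) * g (r • θ)) ∂η := by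
  set ρ := (volume.restrict (Ioi (0 : ℝ))).withDensity fun r => ENNReal.ofReal (r ^ (-1 - α))
  have hker : Measurable fun θ : EuclideanSpace ℝ (Fin d) => ρ.map (fun r : ℝ => r • θ) := by
    have hcomp : (fun θ : EuclideanSpace ℝ (Fin d) => ρ.map (fun r : ℝ => r • θ))
        = fun θ => (ρ.map (Prod.mk θ)).map fun p => p.2 • p.1 := by
      funext θ
      rw [Measure.map_map (by fun_prop) measurable_prodMk_left]
      rfl
    rw [hcomp]
    exact (Measure.measurable_map _ (by fun_prop)).comp Measurable.map_prodMk_left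
  rw [stableMeasure, Measure.lintegral_bind hker.aemeasurable hg.aemeasurable]
  refine lintegral_congr fun θ => ?_
  rw [lintegral_map hg (by fun_prop)]
  exact lintegral_withDensity_eq_lintegral_mul _ (measurable_ofReal_rpow_const _)
    (hg.comp (by fun_prop))

lemma Fnu_stableMeasure (η : Measure (EuclideanSpace ℝ (Fin d))) [SFinite η] (α : ℝ)
    {f : EuclideanSpace ℝ (Fin d) → ℝ} (hf : Continuous f) :
    Fnu (stableMeasure η α) f = 1 / 2 * ∫⁻ θ, (∫⁻ r in Ioi (0 : ℝ),
      ENNReal.ofReal (r ^ (-1 - α)) * l1Increment volume f (r • θ)) ∂η := by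
  set F : (EuclideanSpace ℝ (Fin d) × EuclideanSpace ℝ (Fin d)) × ℝ → ℝ≥0∞ := fun p =>
    ENNReal.ofReal (p.2 ^ (-1 - α)) * ENNReal.ofReal |f (p.2 • p.1.2 + p.1.1) - f p.1.1|
  have hF : Measurable F := ((measurable_ofReal_rpow_const _).comp measurable_snd).mul
    (ENNReal.continuous_ofReal.comp (by fun_prop)).measurable
  rw [Fnu]
  congr 1
  calc ∫⁻ y, ∫⁻ x, ENNReal.ofReal |f (x + y) - f y| ∂stableMeasure η α
      = ∫⁻ y, ∫⁻ θ, (∫⁻ r in Ioi (0 : ℝ), F ((y, θ), r)) ∂η :=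
        lintegral_congr fun y => lintegral_stableMeasure η α
          (ENNReal.continuous_ofReal.comp (by fun_prop)).measurable
    _ = ∫⁻ θ, (∫⁻ y, ∫⁻ r in Ioi (0 : ℝ), F ((y, θ), r)) ∂η :=
        lintegral_lintegral_swap hF.lintegral_prod_right'.aemeasurable
    _ = _ := by
        refine lintegral_congr fun θ => ?_
        rw [lintegral_lintegral_swap (f := fun y r => F ((y, θ), r))
          (hF.comp (by fun_prop)).aemeasurable]
        simp_rw [F, l1Increment, lintegral_const_mul' _ _ ENNReal.ofReal_ne_top]

end StableMeasure

end

theorem statement8_general {d : ℕ}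
    (η : Measure (EuclideanSpace ℝ (Fin d))) (hη : IsProbabilityMeasure η)
    (hηsph : η (Metric.sphere (0 : EuclideanSpace ℝ (Fin d)) 1)ᶜ = 0)
    (f : EuclideanSpace ℝ (Fin d) → ℝ) (hf : ContDiff ℝ 1 f)
    (hfL1 : Integrable f) (hgrad : Integrable fun x => ‖fderiv ℝ f x‖) :
    Tendsto (fun α : ℝ => ENNReal.ofReal (1 - α) * Fnu (stableMeasure η α) f)
      (𝓝[Set.Ioo (0 : ℝ) 1] 1)
      (𝓝 ((1 / 2 : ℝ≥0∞) *
        ∫⁻ θ, (∫⁻ x, ENNReal.ofReal |fderiv ℝ f x θ|) ∂η)) := by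
  have hfi : ∫⁻ x, ENNReal.ofReal |f x| ≠ ∞ := hfL1.abs.lintegral_lt_top.ne
  have hdom :
      ∫⁻ θ, (directionalVariation volume f θ + 2 * ∫⁻ x, ENNReal.ofReal |f x|) ∂η ≠ ∞ := by
    rw [lintegral_add_right _ measurable_const, lintegral_const, measure_univ, mul_one]
    have hη1 : ∀ᵐ θ ∂η, ‖θ‖ = 1 := by
      filter_upwards [mem_ae_iff.mpr hηsph] with θ hθ using mem_sphere_zero_iff_norm.mp hθ
    exact ENNReal.add_ne_top.mpr ⟨((lintegral_directionalVariation_le volume f hη1).trans_lt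
      (by simpa using hgrad.lintegral_lt_top)).ne, ENNReal.mul_ne_top ofNat_ne_top hfi⟩
  have hlim := tendsto_lintegral_filter_of_dominated_convergence _
    (Eventually.of_forall fun α =>
      (measurable_lintegral_rpow_mul_l1Increment volume hf.continuous α).const_mul _)
    (eventually_of_mem (Ioo_mem_nhdsLT (by norm_num : (1 / 2 : ℝ) < 1)) fun α hα =>
      ae_of_all _ fun θ => one_sub_mul_lintegral_rpow_mul_l1Increment_le volume hf θ hα)
    hdom (ae_of_all _ (tendsto_one_sub_mul_lintegral_rpow_mul_l1Increment volume hf hfi))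
  have hrw α : ENNReal.ofReal (1 - α) * Fnu (stableMeasure η α) f = 1 / 2 * ∫⁻ θ,
      (ENNReal.ofReal (1 - α) * ∫⁻ r in Ioi (0 : ℝ),
        ENNReal.ofReal (r ^ (-1 - α)) * l1Increment volume f (r • θ)) ∂η := by
    rw [Fnu_stableMeasure η α hf.continuous, lintegral_const_mul' _ _ ENNReal.ofReal_ne_top]
    ring
  simp only [hrw]
  exact ENNReal.Tendsto.const_mul (hlim.mono_left (nhdsWithin_mono _ Ioo_subset_Iio_self))
    (Or.inr (by simp))

/-- Asymptotics of stable functionals as `α ↑ 1`: if `η` is a probability measure on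
the unit sphere `S^{d−1}` (realized as a measure on `ℝ^d` carried by the sphere), then
for every `C¹` function `f ∈ L¹(ℝ^d)` with `∇f ∈ L¹`,
`(1−α) F_{ν_α}(f) → (1/2) ∫_{S^{d−1}} ∫_{ℝ^d} |∇f(x)·θ| dx η(dθ)` as `α ↑ 1`. -/
theorem statement8 {d : ℕ} (hd : 1 ≤ d)
    (η : Measure (EuclideanSpace ℝ (Fin d))) (hη : IsProbabilityMeasure η)
    (hηsph : η (Metric.sphere (0 : EuclideanSpace ℝ (Fin d)) 1)ᶜ = 0)
    (f : EuclideanSpace ℝ (Fin d) → ℝ) (hf : ContDiff ℝ 1 f)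
    (hfL1 : Integrable f) (hgrad : Integrable fun x => ‖fderiv ℝ f x‖) :
    Tendsto (fun α : ℝ => ENNReal.ofReal (1 - α) * Fnu (stableMeasure η α) f)
      (𝓝[Set.Ioo (0 : ℝ) 1] 1)
      (𝓝 ((1 / 2 : ℝ≥0∞) *
        ∫⁻ θ, (∫⁻ x, ENNReal.ofReal |fderiv ℝ f x θ|) ∂η)) :=
  statement8_general η hη hηsph f hf hfL1 hgrad
end

section
/- Let d ≥ 1 and let (λ_ε)_{ε>0} be a family of Borel probability measures on ℝ^d with λ_ε({0}) = 0 for every ε > 0, such that for every R > 0, λ_ε({x : |x| > R}) → 0 as ε → 0⁺. Let ε_j → 0⁺ be a sequence such that the spherical projections μ_{ε_j} of λ_{ε_j} converge weakly to a probability measure μ on S^{d−1}. Then for every R > 0 and every twice continuously differentiable f : ℝ^d → ℝ, lim_{j→∞} ∫_{B_R} ∫_{B_R} |f(x+y) − f(x)| / |y| λ_{ε_j}(dy) dx = ∫_{S^{d−1}} ∫_{B_R} |∇f(x) · θ| dx μ(dθ), where B_R is the closed Euclidean ball of radius R centred at the origin. -/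
/-!
For `C²` functions the difference quotient `|f (x + y) - f x| / ‖y‖` differs from the directional
derivative `|Df(x) (y / ‖y‖)|` by `O(‖y‖)`, uniformly for `x, y ∈ B_R` (the derivative is Lipschitz
on `B_{2R}`). Integrating in `x`, the inner integral is `H (y / ‖y‖) + O(‖y‖)`, where
`H θ = ∫_{B_R} |Df(x) θ| dx` is continuous. As `λ_ε` concentrates at the origin, both the `O(‖y‖)`
error and the mass outside `B_R` disappear in the limit, and what is left, `∫ H (y / ‖y‖) dλ_{ε_j}`,
converges to `∫ H dμ` by the weak convergence of the spherical projections, once `H` is truncated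
off the unit ball to a bounded continuous function.
-/

open MeasureTheory Filter Topology ENNReal Metric Set
open scoped BoundedContinuousFunction

theorem exists_boundedContinuousFunction_eqOn {X : Type*} [TopologicalSpace X] {h : X → ℝ}
    (hh : Continuous h) {K : Set X} (hK : IsCompact K) :
    ∃ F : X →ᵇ ℝ, EqOn F h K := by
  obtain ⟨C, hC⟩ := hK.exists_bound_of_continuousOn hh.continuousOn
  refine ⟨.ofNormedAddCommGroup (fun x => max (-|C|) (min (h x) |C|)) (by fun_prop) |C|
    fun x => abs_le.2 ⟨le_max_left _ _, max_le (neg_le_self (abs_nonneg C)) (min_le_right _ _)⟩,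
    fun x hx => ?_⟩
  obtain ⟨hlo, hhi⟩ := abs_le.1 ((hC x hx).trans (le_abs_self C))
  simp [hhi, hlo]

theorem tendsto_integral_of_tendsto_nhds_zero {ι E : Type*} [NormedAddCommGroup E]
    [MeasurableSpace E] [OpensMeasurableSpace E] {l : Filter ι} {ν : ι → Measure E}
    [∀ i, IsProbabilityMeasure (ν i)]
    (hν : ∀ δ > (0 : ℝ), Tendsto (fun i => ν i {y | δ < ‖y‖}) l (𝓝 0))
    {g : E → ℝ} {C : ℝ} (hgC : ∀ y, |g y| ≤ C) (hg : Tendsto g (𝓝 0) (𝓝 0)) :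
    Tendsto (fun i => ∫ y, g y ∂ν i) l (𝓝 0) := by
  refine Metric.tendsto_nhds.2 fun η hη => ?_
  obtain ⟨δ, hδ, hgδ⟩ :=
    Metric.eventually_nhds_iff.1 (Metric.tendsto_nhds.1 hg (η / 2) (half_pos hη))
  set S := {y : E | δ / 2 < ‖y‖}
  have hS : MeasurableSet S := measurableSet_lt measurable_const measurable_norm
  have hbound : ∀ y, ‖g y‖ ≤ η / 2 + S.indicator (fun _ => C) y := by
    intro y
    by_cases hy : y ∈ S
    · simpa [hy, Real.norm_eq_abs] using (hgC y).trans (le_add_of_nonneg_left (by positivity))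
    · have hyδ : dist y 0 < δ := by
        rw [dist_zero_right]; linarith [not_lt.1 (show ¬δ / 2 < ‖y‖ from hy)]
      simpa [hy] using (hgδ hyδ).le
  have hsmall : ∀ᶠ i in l, (ν i).real S * C < η / 2 := by
    have : Tendsto (fun i => (ν i).real S * C) l (𝓝 0) := by
      simpa [S, measureReal_def] using
        ((ENNReal.tendsto_toReal zero_ne_top).comp (hν _ (half_pos hδ))).mul_const C
    exact this.eventually (gt_mem_nhds (half_pos hη))
  filter_upwards [hsmall] with i hi
  have hint : Integrable (fun y => η / 2 + S.indicator (fun _ => C) y) (ν i) :=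
    (integrable_const _).add ((integrable_const C).indicator hS)
  rw [dist_zero_right]
  calc ‖∫ y, g y ∂ν i‖ ≤ ∫ y, (η / 2 + S.indicator (fun _ => C) y) ∂ν i :=
        norm_integral_le_of_norm_le hint (.of_forall hbound)
    _ = η / 2 + (ν i).real S * C := by
        rw [integral_add (integrable_const _) ((integrable_const C).indicator hS), integral_const,
          integral_indicator_const _ hS]
        simp
    _ < η := by linarith

theorem Convex.norm_sub_sub_fderiv_le_of_lipschitzOnWith {E F : Type*} [NormedAddCommGroup E]
    [NormedSpace ℝ E] [NormedAddCommGroup F] [NormedSpace ℝ F] {f : E → F} {s : Set E}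
    (hs : Convex ℝ s) (hf : ∀ z ∈ s, DifferentiableAt ℝ f z) {K : NNReal}
    (hK : LipschitzOnWith K (fderiv ℝ f) s) {x y : E} (hx : x ∈ s) (hxy : x + y ∈ s) :
    ‖f (x + y) - f x - fderiv ℝ f x y‖ ≤ K * ‖y‖ ^ 2 := by
  have hseg : segment ℝ x (x + y) ⊆ s := hs.segment_subset hx hxy
  have bound : ∀ z ∈ segment ℝ x (x + y), ‖fderiv ℝ f z - fderiv ℝ f x‖ ≤ K * ‖y‖ := by
    intro z hz
    have hzx : dist x z ≤ ‖y‖ := by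
      have := dist_add_dist_of_mem_segment hz
      rw [dist_self_add_right] at this
      linarith [dist_nonneg (x := z) (y := x + y)]
    calc ‖fderiv ℝ f z - fderiv ℝ f x‖ ≤ K * ‖z - x‖ := hK.norm_sub_le (hseg hz) hx
      _ ≤ K * ‖y‖ := by rw [← dist_eq_norm, dist_comm]; gcongr
  simpa [sq, mul_assoc] using (convex_segment x (x + y)).norm_image_sub_le_of_norm_fderiv_le'
    (fun z hz => hf z (hseg hz)) bound (left_mem_segment ℝ _ _) (right_mem_segment ℝ _ _)

section DifferenceQuotient

variable {E : Type*} [NormedAddCommGroup E] [MeasurableSpace E]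

-- At `y = 0` the integrand is `0` (division by zero), matching `integralAbsFDeriv ρ s f 0 = 0`.
noncomputable def integralAbsDiffQuot (ρ : Measure E) (s : Set E) (f : E → ℝ) (y : E) : ℝ :=
  ∫ x in s, |f (x + y) - f x| / ‖y‖ ∂ρ

noncomputable def integralAbsFDeriv [NormedSpace ℝ E] (ρ : Measure E) (s : Set E) (f : E → ℝ)
    (v : E) : ℝ :=
  ∫ x in s, |fderiv ℝ f x v| ∂ρ

variable {ρ : Measure E} {s : Set E} {f : E → ℝ}

theorem integrableOn_abs_sub_div_norm [OpensMeasurableSpace E] [IsFiniteMeasureOnCompacts ρ]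
    (hs : IsCompact s) (hf : Continuous f) (y : E) :
    IntegrableOn (fun x => |f (x + y) - f x| / ‖y‖) s ρ :=
  (by fun_prop : Continuous fun x => |f (x + y) - f x| / ‖y‖).continuousOn.integrableOn_compact hs

theorem integrableOn_abs_fderiv_apply [NormedSpace ℝ E] [OpensMeasurableSpace E]
    [IsFiniteMeasureOnCompacts ρ] (hs : IsCompact s) (hf : ContDiff ℝ 1 f) (v : E) :
    IntegrableOn (fun x => |fderiv ℝ f x v|) s ρ :=
  ((hf.continuous_fderiv one_ne_zero).clm_apply continuous_const).abs.continuousOn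
    |>.integrableOn_compact hs

theorem ofReal_integralAbsDiffQuot [OpensMeasurableSpace E] [IsFiniteMeasureOnCompacts ρ]
    (hs : IsCompact s) (hf : Continuous f) (y : E) :
    ENNReal.ofReal (integralAbsDiffQuot ρ s f y) =
      ∫⁻ x in s, ENNReal.ofReal (|f (x + y) - f x| / ‖y‖) ∂ρ :=
  ofReal_integral_eq_lintegral_ofReal (integrableOn_abs_sub_div_norm hs hf y)
    (.of_forall fun _ => by positivity)

theorem ofReal_integralAbsFDeriv [NormedSpace ℝ E] [OpensMeasurableSpace E]
    [IsFiniteMeasureOnCompacts ρ] (hs : IsCompact s) (hf : ContDiff ℝ 1 f) (v : E) :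
    ENNReal.ofReal (integralAbsFDeriv ρ s f v) = ∫⁻ x in s, ENNReal.ofReal |fderiv ℝ f x v| ∂ρ :=
  ofReal_integral_eq_lintegral_ofReal (integrableOn_abs_fderiv_apply hs hf v)
    (.of_forall fun _ => abs_nonneg _)

theorem measurable_integralAbsDiffQuot [SecondCountableTopology E] [BorelSpace E] [SFinite ρ]
    (hf : Continuous f) : Measurable (integralAbsDiffQuot ρ s f) := by
  have : Measurable fun p : E × E => |f (p.1 + p.2) - f p.1| / ‖p.2‖ := by fun_prop
  exact this.stronglyMeasurable.integral_prod_left'.measurable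

theorem continuous_integralAbsFDeriv [NormedSpace ℝ E] [FiniteDimensional ℝ E]
    [OpensMeasurableSpace E] [IsLocallyFiniteMeasure ρ] (hs : IsCompact s) (hf : ContDiff ℝ 1 f) :
    Continuous (integralAbsFDeriv ρ s f) :=
  continuous_parametric_integral_of_continuous
    (((hf.continuous_fderiv one_ne_zero).comp continuous_snd).clm_apply continuous_fst).abs hs

theorem abs_integralAbsDiffQuot_le (hs : ρ s < ∞) {K : ℝ} (hK0 : 0 ≤ K) {y : E}
    (hK : ∀ x ∈ s, |f (x + y) - f x| ≤ K * ‖y‖) :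
    |integralAbsDiffQuot ρ s f y| ≤ K * ρ.real s := by
  rw [← Real.norm_eq_abs]
  refine norm_setIntegral_le_of_norm_le_const hs fun x hx => ?_
  rw [Real.norm_eq_abs, abs_div, abs_abs, abs_norm]
  exact div_le_of_le_mul₀ (norm_nonneg y) hK0 (hK x hx)

theorem abs_integralAbsDiffQuot_sub_integralAbsFDeriv_le [NormedSpace ℝ E] [OpensMeasurableSpace E]
    [IsFiniteMeasureOnCompacts ρ] (hs : IsCompact s) (hf : ContDiff ℝ 1 f) {K : ℝ} {y : E}
    (hK : ∀ x ∈ s, |f (x + y) - f x - fderiv ℝ f x y| ≤ K * ‖y‖ ^ 2) :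
    |integralAbsDiffQuot ρ s f y - integralAbsFDeriv ρ s f (‖y‖⁻¹ • y)| ≤ K * ‖y‖ * ρ.real s := by
  rw [integralAbsDiffQuot, integralAbsFDeriv, ← integral_sub (integrableOn_abs_sub_div_norm hs
    hf.continuous y) (integrableOn_abs_fderiv_apply hs hf _), ← Real.norm_eq_abs]
  refine norm_setIntegral_le_of_norm_le_const hs.measure_lt_top fun x hx => ?_
  rw [Real.norm_eq_abs, map_smul, smul_eq_mul, abs_mul, abs_inv, abs_norm, div_eq_inv_mul,
    ← mul_sub, abs_mul, abs_inv, abs_norm]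
  calc ‖y‖⁻¹ * |(|f (x + y) - f x| - |fderiv ℝ f x y|)|
      ≤ ‖y‖⁻¹ * (K * ‖y‖ ^ 2) := by
        gcongr
        exact (abs_abs_sub_abs_le_abs_sub _ _).trans (hK x hx)
    _ = K * ‖y‖ := by
        rcases eq_or_ne ‖y‖ 0 with hy | hy
        · simp [hy]
        · field_simp

theorem integrableOn_integralAbsDiffQuot_closedBall [NormedSpace ℝ E] [FiniteDimensional ℝ E]
    [BorelSpace E] [IsFiniteMeasureOnCompacts ρ] {ν : Measure E} [IsFiniteMeasure ν]
    (hf : ContDiff ℝ 1 f) (R : ℝ) :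
    IntegrableOn (integralAbsDiffQuot ρ (closedBall 0 R) f) (closedBall 0 R) ν := by
  obtain ⟨K, hK⟩ := hf.contDiffOn.exists_lipschitzOnWith one_ne_zero
    (convex_closedBall (0 : E) (R + R)) (isCompact_closedBall _ _)
  refine .of_bound (measure_lt_top _ _)
    (measurable_integralAbsDiffQuot hf.continuous).aestronglyMeasurable
    (K * ρ.real (closedBall 0 R)) (ae_restrict_of_forall_mem measurableSet_closedBall fun y hy => ?_)
  rw [Real.norm_eq_abs]
  refine abs_integralAbsDiffQuot_le (isCompact_closedBall _ _).measure_lt_top K.coe_nonneg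
    fun x hx => ?_
  rw [mem_closedBall_zero_iff] at hx hy
  have hx2 : x ∈ closedBall (0 : E) (R + R) :=
    mem_closedBall_zero_iff.2 (by linarith [norm_nonneg y])
  have hxy2 : x + y ∈ closedBall (0 : E) (R + R) :=
    mem_closedBall_zero_iff.2 (by linarith [norm_add_le x y])
  simpa [← Real.norm_eq_abs] using hK.norm_sub_le hxy2 hx2

theorem tendsto_setIntegral_integralAbsDiffQuot [NormedSpace ℝ E] [FiniteDimensional ℝ E]
    [BorelSpace E] [IsFiniteMeasureOnCompacts ρ] {ι : Type*} {l : Filter ι}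
    {ν : ι → Measure E} [∀ i, IsProbabilityMeasure (ν i)]
    (hν : ∀ δ > (0 : ℝ), Tendsto (fun i => ν i {y | δ < ‖y‖}) l (𝓝 0))
    {μ : Measure E} (hμ : ∀ᵐ θ ∂μ, θ ∈ closedBall (0 : E) 1)
    (hweak : ∀ F : E →ᵇ ℝ, Tendsto (fun i => ∫ y, F (‖y‖⁻¹ • y) ∂ν i) l (𝓝 (∫ θ, F θ ∂μ)))
    {R : ℝ} (hR : 0 < R) (hf : ContDiff ℝ 2 f) :
    Tendsto (fun i => ∫ y in closedBall 0 R, integralAbsDiffQuot ρ (closedBall 0 R) f y ∂ν i) l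
      (𝓝 (∫ θ, integralAbsFDeriv ρ (closedBall 0 R) f θ ∂μ)) := by
  set B := closedBall (0 : E) R
  obtain ⟨K, hK⟩ := (hf.fderiv_right (m := 1) le_rfl).contDiffOn.exists_lipschitzOnWith
    one_ne_zero (convex_closedBall (0 : E) (R + R)) (isCompact_closedBall _ _)
  have hclose : ∀ y ∈ B, |integralAbsDiffQuot ρ B f y - integralAbsFDeriv ρ B f (‖y‖⁻¹ • y)|
      ≤ K * ‖y‖ * ρ.real B := by
    intro y hy
    refine abs_integralAbsDiffQuot_sub_integralAbsFDeriv_le (isCompact_closedBall _ _)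
      (hf.of_le one_le_two) fun x hx => ?_
    rw [mem_closedBall_zero_iff] at hx hy
    have hx2 : x ∈ closedBall (0 : E) (R + R) :=
      mem_closedBall_zero_iff.2 (by linarith [norm_nonneg y])
    have hxy2 : x + y ∈ closedBall (0 : E) (R + R) :=
      mem_closedBall_zero_iff.2 (by linarith [norm_add_le x y])
    rw [← Real.norm_eq_abs]
    exact (convex_closedBall _ _).norm_sub_sub_fderiv_le_of_lipschitzOnWith
      (fun z _ => hf.differentiable two_ne_zero z) hK hx2 hxy2
  obtain ⟨F, hF⟩ := exists_boundedContinuousFunction_eqOn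
    (continuous_integralAbsFDeriv (ρ := ρ) (isCompact_closedBall (0 : E) R) (hf.of_le one_le_two))
    (isCompact_closedBall (0 : E) 1)
  have hFn : ∀ y : E, F (‖y‖⁻¹ • y) = integralAbsFDeriv ρ B f (‖y‖⁻¹ • y) := by
    intro y
    refine hF (mem_closedBall_zero_iff.2 ?_)
    rw [norm_smul, norm_inv, norm_norm]
    exact inv_mul_le_one_of_le₀ le_rfl (norm_nonneg y)
  set g : E → ℝ := fun y => B.indicator (integralAbsDiffQuot ρ B f) y - F (‖y‖⁻¹ • y)
  have hg : ∀ y ∈ B, |g y| ≤ K * ‖y‖ * ρ.real B := fun y hy => by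
    simpa [g, hy, hFn] using hclose y hy
  have hg_bdd : ∀ y, |g y| ≤ K * R * ρ.real B + ‖F‖ := by
    intro y
    by_cases hy : y ∈ B
    · calc |g y| ≤ K * ‖y‖ * ρ.real B := hg y hy
        _ ≤ K * R * ρ.real B := by gcongr; exact mem_closedBall_zero_iff.1 hy
        _ ≤ K * R * ρ.real B + ‖F‖ := le_add_of_nonneg_right (norm_nonneg F)
    · simpa [g, hy] using (F.norm_coe_le_norm _).trans (le_add_of_nonneg_left (by positivity))
  have hg0 : Tendsto g (𝓝 0) (𝓝 0) := by
    refine squeeze_zero_norm' (eventually_of_mem (closedBall_mem_nhds 0 hR) hg) ?_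
    have : Continuous fun y : E => K * ‖y‖ * ρ.real B := by fun_prop
    simpa using this.tendsto 0
  have hFn_int : ∀ i, Integrable (fun y => F (‖y‖⁻¹ • y)) (ν i) := fun i =>
    .of_bound (F.continuous.measurable.comp (by fun_prop)).aestronglyMeasurable ‖F‖
      (.of_forall fun y => F.norm_coe_le_norm _)
  have hG_int : ∀ i, Integrable (B.indicator (integralAbsDiffQuot ρ B f)) (ν i) := fun i =>
    (integrableOn_integralAbsDiffQuot_closedBall (hf.of_le one_le_two) R).integrable_indicator
      measurableSet_closedBall
  have hlim := (tendsto_integral_of_tendsto_nhds_zero hν hg_bdd hg0).add (hweak F)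
  rw [zero_add, integral_congr_ae (hμ.mono fun θ hθ => hF hθ)] at hlim
  refine hlim.congr fun i => ?_
  have hg_int : Integrable g (ν i) := (hG_int i).sub (hFn_int i)
  rw [← integral_add hg_int (hFn_int i), ← integral_indicator measurableSet_closedBall]
  simp [g, B]

theorem ofReal_setIntegral_integralAbsDiffQuot [SecondCountableTopology E] [BorelSpace E]
    [IsFiniteMeasureOnCompacts ρ] {ν : Measure E} [SFinite ν] (hs : IsCompact s)
    (hf : Continuous f) {t : Set E} (ht : IntegrableOn (integralAbsDiffQuot ρ s f) t ν) :
    ENNReal.ofReal (∫ y in t, integralAbsDiffQuot ρ s f y ∂ν) =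
      ∫⁻ x in s, ∫⁻ y in t, ENNReal.ofReal (|f (x + y) - f x| / ‖y‖) ∂ν ∂ρ := by
  have := isFiniteMeasure_restrict.2 (hs.measure_ne_top (μ := ρ))
  have hm : Measurable fun p : E × E => ENNReal.ofReal (|f (p.1 + p.2) - f p.1| / ‖p.2‖) := by
    fun_prop
  rw [lintegral_lintegral_swap hm.aemeasurable]
  simp_rw [← ofReal_integralAbsDiffQuot hs hf]
  exact ofReal_integral_eq_lintegral_ofReal ht
    (.of_forall fun y => integral_nonneg fun x => by positivity)

end DifferenceQuotient

theorem statement19_general {d : ℕ}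
    (lam : ℝ → Measure (EuclideanSpace ℝ (Fin d)))
    (hprob : ∀ ε > (0 : ℝ), IsProbabilityMeasure (lam ε))
    (htight : ∀ R > (0 : ℝ),
      Tendsto (fun ε => lam ε {x | R < ‖x‖}) (𝓝[>] (0 : ℝ)) (𝓝 0))
    (εj : ℕ → ℝ) (hεjpos : ∀ j, 0 < εj j) (hεj : Tendsto εj atTop (𝓝 0))
    (μ : Measure (EuclideanSpace ℝ (Fin d))) (hμ : IsProbabilityMeasure μ)
    (hμsph : μ (Metric.sphere (0 : EuclideanSpace ℝ (Fin d)) 1)ᶜ = 0)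
    (hweak : ∀ F : BoundedContinuousFunction (EuclideanSpace ℝ (Fin d)) ℝ,
      Tendsto (fun j => ∫ y, F (‖y‖⁻¹ • y) ∂(lam (εj j))) atTop
        (𝓝 (∫ θ, F θ ∂μ)))
    (R : ℝ) (hR : 0 < R)
    (f : EuclideanSpace ℝ (Fin d) → ℝ) (hf : ContDiff ℝ 2 f) :
    Tendsto
      (fun j => ∫⁻ x in Metric.closedBall (0 : EuclideanSpace ℝ (Fin d)) R,
        ∫⁻ y in Metric.closedBall (0 : EuclideanSpace ℝ (Fin d)) R,
          ENNReal.ofReal (|f (x + y) - f x| / ‖y‖) ∂(lam (εj j)))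
      atTop
      (𝓝 (∫⁻ θ, (∫⁻ x in Metric.closedBall (0 : EuclideanSpace ℝ (Fin d)) R,
        ENNReal.ofReal (|fderiv ℝ f x θ|)) ∂μ)) := by
  set B := closedBall (0 : EuclideanSpace ℝ (Fin d)) R
  have : ∀ j, IsProbabilityMeasure (lam (εj j)) := fun j => hprob _ (hεjpos j)
  have hconc : ∀ δ > (0 : ℝ), Tendsto (fun j => lam (εj j) {y | δ < ‖y‖}) atTop (𝓝 0) :=
    fun δ hδ => (htight δ hδ).comp (tendsto_nhdsWithin_iff.2 ⟨hεj, .of_forall hεjpos⟩)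
  have hμS : ∀ᵐ θ ∂μ, θ ∈ sphere (0 : EuclideanSpace ℝ (Fin d)) 1 := hμsph
  have hlim := tendsto_setIntegral_integralAbsDiffQuot (ρ := volume) hconc
    (hμS.mono fun _ hθ => sphere_subset_closedBall hθ) hweak hR hf
  have hH : Integrable (integralAbsFDeriv volume B f) μ := by
    rw [← Measure.restrict_eq_self_of_ae_mem hμS]
    exact (continuous_integralAbsFDeriv (isCompact_closedBall _ _)
      (hf.of_le one_le_two)).continuousOn.integrableOn_compact (isCompact_sphere _ _)
  have hRHS : ∫⁻ θ, (∫⁻ x in B, ENNReal.ofReal |fderiv ℝ f x θ|) ∂μ =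
      ENNReal.ofReal (∫ θ, integralAbsFDeriv volume B f θ ∂μ) := by
    simp_rw [← ofReal_integralAbsFDeriv (ρ := volume) (s := B) (isCompact_closedBall _ _)
      (hf.of_le one_le_two)]
    exact (ofReal_integral_eq_lintegral_ofReal hH
      (.of_forall fun θ => integral_nonneg fun x => abs_nonneg _)).symm
  rw [hRHS]
  refine (ENNReal.tendsto_ofReal hlim).congr fun j => ?_
  exact ofReal_setIntegral_integralAbsDiffQuot (isCompact_closedBall _ _) hf.continuous
    (integrableOn_integralAbsDiffQuot_closedBall (hf.of_le one_le_two) R)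

/-- Localized convergence lemma: if `(λ_ε)` is a family of probability measures with
no atom at `0` whose mass concentrates at the origin, and `ε_j → 0⁺` is a sequence
whose spherical projections converge weakly to a probability measure `μ` on the unit
sphere (realized as a measure on `ℝ^d` carried by the sphere), then for every `R > 0`
and every `C²` function `f : ℝ^d → ℝ`,
`∫_{B_R} ∫_{B_R} |f(x+y) − f(x)|/|y| λ_{ε_j}(dy) dx →
  ∫_{S^{d−1}} ∫_{B_R} |∇f(x)·θ| dx μ(dθ)`. -/
theorem statement19 {d : ℕ} (hd : 1 ≤ d)
    (lam : ℝ → Measure (EuclideanSpace ℝ (Fin d)))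
    (hprob : ∀ ε > (0 : ℝ), IsProbabilityMeasure (lam ε))
    (h0 : ∀ ε > (0 : ℝ), lam ε {0} = 0)
    (htight : ∀ R > (0 : ℝ),
      Tendsto (fun ε => lam ε {x | R < ‖x‖}) (𝓝[>] (0 : ℝ)) (𝓝 0))
    (εj : ℕ → ℝ) (hεjpos : ∀ j, 0 < εj j) (hεj : Tendsto εj atTop (𝓝 0))
    (μ : Measure (EuclideanSpace ℝ (Fin d))) (hμ : IsProbabilityMeasure μ)
    (hμsph : μ (Metric.sphere (0 : EuclideanSpace ℝ (Fin d)) 1)ᶜ = 0)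
    (hweak : ∀ F : BoundedContinuousFunction (EuclideanSpace ℝ (Fin d)) ℝ,
      Tendsto (fun j => ∫ y, F (‖y‖⁻¹ • y) ∂(lam (εj j))) atTop
        (𝓝 (∫ θ, F θ ∂μ)))
    (R : ℝ) (hR : 0 < R)
    (f : EuclideanSpace ℝ (Fin d) → ℝ) (hf : ContDiff ℝ 2 f) :
    Tendsto
      (fun j => ∫⁻ x in Metric.closedBall (0 : EuclideanSpace ℝ (Fin d)) R,
        ∫⁻ y in Metric.closedBall (0 : EuclideanSpace ℝ (Fin d)) R,
          ENNReal.ofReal (|f (x + y) - f x| / ‖y‖) ∂(lam (εj j)))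
      atTop
      (𝓝 (∫⁻ θ, (∫⁻ x in Metric.closedBall (0 : EuclideanSpace ℝ (Fin d)) R,
        ENNReal.ofReal (|fderiv ℝ f x θ|)) ∂μ)) :=
  statement19_general lam hprob htight εj hεjpos hεj μ hμ hμsph hweak R hR f hf
end
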